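/- Let G be a finitely generated group. The number a_k(G) of index-k subgroups of G satisfies Hall's recursion: a_k(G) = |Hom(G, S_k)|/(k−1)! − Σ_{l=1}^{k−1} |Hom(G, S_{k−l})| · a_l(G) / (k−l)!. -/

import Mathlib

/-!
Let `G` act on `Fin n` through `f : G →* S_n` and let `O` be the orbit of `0`. The action splits
into a transitive action on `O` and an arbitrary action on the complement of `O`. A transitive
action on a `j`-element set with base point `a` amounts to the stabilizer `H` of `a`, a subgroup
of index `j`, together with a bijection `G ⧸ H ≃ O` sending the coset `H` to `a`; hence there are
`a_j(G) (j-1)!` of them. Counting homomorphisms by the size `j` of `O` gives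
`|Hom(G, S_n)| = ∑_j C(n-1, j-1) a_j(G) (j-1)! |Hom(G, S_{n-j})|`, and dividing by `(n-1)!`
yields Hall's recursion. Finite generation of `G` makes every count finite.
-/

open Equiv Finset Nat

theorem Group.FG.finite_monoidHom {G : Type*} [Group G] (hG : Group.FG G) (H : Type*) [Group H]
    [Finite H] : Finite (G →* H) := by
  obtain ⟨S, hS, hSfin⟩ := Group.fg_iff.mp hG
  have : Finite S := hSfin
  exact .of_injective (fun f (s : S) => f s) fun f g h =>
    MonoidHom.eq_of_eqOn_dense hS fun x hx => congrFun h ⟨x, hx⟩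

theorem Nat.card_eq_card_mul_of_card_fiber {α β : Type*} [Finite α] (F : α → β) {c : ℕ}
    (hF : ∀ b, Nat.card {a // F a = b} = c) : Nat.card α = Nat.card β * c := by
  rcases eq_or_ne c 0 with rfl | hc
  · have : IsEmpty α := ⟨fun a =>
      Nat.card_ne_zero.mpr ⟨⟨⟨a, rfl⟩⟩, inferInstance⟩ (hF (F a))⟩
    simp
  have hsurj : F.Surjective := fun b =>
    let ⟨a, ha⟩ := (Nat.card_ne_zero.mp (hF b ▸ hc)).1.some
    ⟨a, ha⟩
  have : Fintype β := have := Finite.of_surjective F hsurj; Fintype.ofFinite β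
  rw [← Nat.card_congr (Equiv.sigmaFiberEquiv F), Nat.card_sigma]
  simp [hF]

theorem Nat.card_equiv_apply_eq {α β : Type*} [Finite α] (a : α) (b : β)
    (h : Nat.card α = Nat.card β) : Nat.card {e : α ≃ β // e a = b} = (Nat.card α - 1)! := by
  classical
  have hnone : {e : α ≃ β // e a = b} ≃ {e : Option {x // x ≠ a} ≃ β // e none = b} :=
    ((optionSubtypeNe a).equivCongr (.refl β)).symm.subtypeEquiv fun e => by simp
  have : Finite β := Nat.finite_of_card_ne_zero (h ▸ Nat.card_ne_zero.mpr ⟨⟨a⟩, inferInstance⟩)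
  have := Fintype.ofFinite α
  have := Fintype.ofFinite β
  have hα := Fintype.card_congr (optionSubtypeNe a)
  have hβ := Fintype.card_congr (optionSubtypeNe b)
  rw [Fintype.card_option] at hα hβ
  simp only [Nat.card_eq_fintype_card] at h ⊢
  rw [Fintype.card_congr (hnone.trans (optionSubtype b)),
    Fintype.card_equiv (Fintype.equivOfCardEq (by omega)), ← hα, Nat.add_sub_cancel]

theorem Finset.sum_filter_mem_eq_sum_choose {α M : Type*} [Fintype α] [DecidableEq α]
    [AddCommMonoid M] {m : ℕ} (hα : Fintype.card α = m + 1) (a : α) (F : ℕ → M) :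
    ∑ O with a ∈ O, F #O = ∑ j ∈ range (m + 1), m.choose j • F (j + 1) := by
  have hcard : #(univ.erase a) = m := by simp [hα]
  calc ∑ O with a ∈ O, F #O = ∑ t ∈ (univ.erase a).powerset, F (#t + 1) := by
        refine sum_nbij' (·.erase a) (insert a)
          (fun O _ => by simpa using erase_subset_erase a (subset_univ O)) (by simp)
          (fun O hO => ?_) (fun t ht => ?_) (fun O hO => ?_)
        · exact insert_erase (mem_filter.mp hO).2
        · exact erase_insert fun ha => by simpa using mem_powerset.mp ht ha
        · rw [card_erase_add_one (mem_filter.mp hO).2]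
    _ = ∑ j ∈ range (m + 1), m.choose j • F (j + 1) := by
        rw [sum_powerset_apply_card (fun j => F (j + 1)), hcard]

namespace HallRecursion

variable {G α : Type*} [Group G]

def IsTransitiveAt (f : G →* Perm α) (a : α) : Prop := ∀ x, ∃ g, f g a = x

def stabilizerAt (f : G →* Perm α) (a : α) : Subgroup G :=
  (MulAction.stabilizer (Perm α) a).comap f

@[simp] lemma mem_stabilizerAt {f : G →* Perm α} {a : α} {g : G} :
    g ∈ stabilizerAt f a ↔ f g a = a := Iff.rfl

lemma apply_eq_apply_iff_inv_mul_mem_stabilizerAt {f : G →* Perm α} {a : α} {g g' : G} :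
    f g a = f g' a ↔ g⁻¹ * g' ∈ stabilizerAt f a := by
  rw [mem_stabilizerAt, map_mul, map_inv, Perm.mul_apply, Perm.inv_eq_iff_eq, eq_comm]

lemma card_monoidHom_perm_congr {β : Type*} (e : α ≃ β) :
    Nat.card (G →* Perm α) = Nat.card (G →* Perm β) :=
  Nat.card_congr (MulEquiv.monoidHomCongrRightEquiv e.permCongrHom)

section Transitive

variable {H : Subgroup G}

def quotientAction (e : G ⧸ H ≃ α) : G →* Perm α :=
  e.permCongrHom.toMonoidHom.comp (MulAction.toPermHom G (G ⧸ H))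

lemma quotientAction_apply_of_apply_one {e : G ⧸ H ≃ α} {a : α} (he : e (1 : G) = a) (g : G) :
    quotientAction e g a = e g := by
  simp [quotientAction, Equiv.permCongr_apply, ← he]

lemma isTransitiveAt_quotientAction {e : G ⧸ H ≃ α} {a : α} (he : e (1 : G) = a) :
    IsTransitiveAt (quotientAction e) a := fun x => by
  obtain ⟨g, hg⟩ := QuotientGroup.mk_surjective (e.symm x)
  exact ⟨g, by rw [quotientAction_apply_of_apply_one he, hg, apply_symm_apply]⟩

lemma stabilizerAt_quotientAction {e : G ⧸ H ≃ α} {a : α} (he : e (1 : G) = a) :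
    stabilizerAt (quotientAction e) a = H := by
  ext g
  rw [mem_stabilizerAt, quotientAction_apply_of_apply_one he, ← he, e.apply_eq_iff_eq,
    QuotientGroup.eq]
  simp

noncomputable def orbitEquiv {f : G →* Perm α} {a : α} (hf : IsTransitiveAt f a)
    (hH : stabilizerAt f a = H) : G ⧸ H ≃ α :=
  .ofBijective (Quotient.lift (f · a) fun g g' hgg' => by
      rwa [apply_eq_apply_iff_inv_mul_mem_stabilizerAt, hH, ← QuotientGroup.leftRel_apply])
    ⟨fun q q' => QuotientGroup.induction_on q fun g => QuotientGroup.induction_on q' fun g' hgg' =>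
      QuotientGroup.eq.mpr <| by rwa [← hH, ← apply_eq_apply_iff_inv_mul_mem_stabilizerAt],
     fun x => let ⟨g, hg⟩ := hf x; ⟨g, hg⟩⟩

@[simp] lemma orbitEquiv_mk {f : G →* Perm α} {a : α} (hf : IsTransitiveAt f a)
    (hH : stabilizerAt f a = H) (g : G) : orbitEquiv hf hH g = f g a := rfl

lemma index_stabilizerAt {f : G →* Perm α} {a : α} (hf : IsTransitiveAt f a) :
    (stabilizerAt f a).index = Nat.card α := by
  rw [Subgroup.index_eq_card, Nat.card_congr (orbitEquiv hf rfl)]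

variable (H) in
noncomputable def transitiveFiberEquiv (a : α) :
    {f : {f : G →* Perm α // IsTransitiveAt f a} // stabilizerAt f.1 a = H} ≃
      {e : G ⧸ H ≃ α // e (1 : G) = a} where
  toFun f := ⟨orbitEquiv f.1.2 f.2, by simp⟩
  invFun e := ⟨⟨quotientAction e.1, isTransitiveAt_quotientAction e.2⟩,
    stabilizerAt_quotientAction e.2⟩
  left_inv := by
    rintro ⟨⟨f, hf⟩, hH⟩
    ext g x
    obtain ⟨g', rfl⟩ := hf x
    have hg' : (orbitEquiv hf hH).symm (f g' a) = g' := (orbitEquiv hf hH).symm_apply_eq.mpr rfl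
    change orbitEquiv hf hH (g • (orbitEquiv hf hH).symm (f g' a)) = f g (f g' a)
    rw [hg', MulAction.Quotient.smul_mk, orbitEquiv_mk, smul_eq_mul, map_mul, Perm.mul_apply]
  right_inv := by
    rintro ⟨e, he⟩
    ext q
    induction q using QuotientGroup.induction_on with | H g => ?_
    exact quotientAction_apply_of_apply_one he g

theorem card_isTransitiveAt (hG : Group.FG G) [Finite α] (a : α) :
    Nat.card {f : G →* Perm α // IsTransitiveAt f a} =
      Nat.card {H : Subgroup G // H.index = Nat.card α} * (Nat.card α - 1)! := by
  have := hG.finite_monoidHom (Perm α)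
  refine Nat.card_eq_card_mul_of_card_fiber
    (fun f => ⟨stabilizerAt f.1 a, index_stabilizerAt f.2⟩) fun H => ?_
  have hH : Nat.card (G ⧸ H.1) = Nat.card α := by rw [← Subgroup.index_eq_card, H.2]
  have : Finite (G ⧸ H.1) :=
    Nat.finite_of_card_ne_zero (hH ▸ Nat.card_ne_zero.mpr ⟨⟨a⟩, inferInstance⟩ :)
  rw [Nat.card_congr ((Equiv.subtypeEquivRight fun f => Subtype.ext_iff).trans
    (transitiveFiberEquiv H.1 a)), Nat.card_equiv_apply_eq _ _ hH, hH]

end Transitive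

section Orbit

def restrictHom (p : α → Prop) (f : G →* Perm α) (h : ∀ g x, p (f g x) ↔ p x) :
    G →* Perm {x // p x} where
  toFun g := (f g).subtypePerm (h g)
  map_one' := by simp only [map_one]; rfl
  map_mul' g g' := by simp only [map_mul]; rfl

def invariantHomEquiv (p : α → Prop) [DecidablePred p] :
    {f : G →* Perm α // ∀ g x, p (f g x) ↔ p x} ≃
      (G →* Perm {x // p x}) × (G →* Perm {x // ¬p x}) where
  toFun f := (restrictHom p f.1 f.2, restrictHom (¬p ·) f.1 fun g x => not_congr (f.2 g x))
  invFun f := ⟨(Perm.subtypeCongrHom p).comp (f.1.prod f.2), fun g x => by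
    by_cases hx : p x
    · simpa [Perm.subtypeCongr.left_apply, hx] using (f.1 g ⟨x, hx⟩).2
    · simpa [Perm.subtypeCongr.right_apply, hx] using (f.2 g ⟨x, hx⟩).2⟩
  left_inv f := by
    ext g x
    by_cases hx : p x <;> simp [restrictHom, Perm.subtypeCongr.left_apply,
      Perm.subtypeCongr.right_apply, hx]
  right_inv f := by
    ext g x <;> simp [restrictHom, Perm.subtypeCongr.left_apply_subtype,
      Perm.subtypeCongr.right_apply_subtype]

variable [Fintype α]

open Classical in
noncomputable def orbitFinset (f : G →* Perm α) (a : α) : Finset α := {x | ∃ g, f g a = x}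

lemma mem_orbitFinset {f : G →* Perm α} {a x : α} : x ∈ orbitFinset f a ↔ ∃ g, f g a = x := by
  simp [orbitFinset]

lemma mem_orbitFinset_self (f : G →* Perm α) (a : α) : a ∈ orbitFinset f a :=
  mem_orbitFinset.mpr ⟨1, by simp⟩

lemma orbitFinset_eq_iff {f : G →* Perm α} {a : α} {O : Finset α} (ha : a ∈ O) :
    orbitFinset f a = O ↔ ∃ h : ∀ g x, f g x ∈ O ↔ x ∈ O,
      IsTransitiveAt (restrictHom (· ∈ O) f h) ⟨a, ha⟩ := by
  constructor
  · rintro rfl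
    refine ⟨fun g x => ?_, fun ⟨x, hx⟩ => ?_⟩
    · simp only [mem_orbitFinset]
      constructor
      · rintro ⟨g', hg'⟩
        exact ⟨g⁻¹ * g', by simp [Perm.mul_apply, hg']⟩
      · rintro ⟨g', rfl⟩
        exact ⟨g * g', by rw [map_mul, Perm.mul_apply]⟩
    · obtain ⟨g, rfl⟩ := mem_orbitFinset.mp hx
      exact ⟨g, rfl⟩
  · rintro ⟨hO, hf⟩
    ext x
    rw [mem_orbitFinset]
    constructor
    · rintro ⟨g, rfl⟩
      exact (hO g a).mpr ha
    · intro hx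
      obtain ⟨g, hg⟩ := hf ⟨x, hx⟩
      exact ⟨g, congrArg Subtype.val hg⟩

noncomputable def orbitFiberEquiv [DecidableEq α] {a : α} {O : Finset α} (ha : a ∈ O) :
    {f : G →* Perm α // orbitFinset f a = O} ≃
      {f : G →* Perm O // IsTransitiveAt f ⟨a, ha⟩} × (G →* Perm {x // x ∉ O}) :=
  (Equiv.subtypeEquivRight fun _ => orbitFinset_eq_iff ha).trans <|
    (Equiv.subtypeSubtypeEquivSubtypeExists _
      fun f => IsTransitiveAt (invariantHomEquiv (· ∈ O) f).1 ⟨a, ha⟩).symm.trans <|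
      ((invariantHomEquiv (· ∈ O)).subtypeEquiv fun _ => Iff.rfl).trans
        (Equiv.prodSubtypeFstEquivSubtypeProd (p := fun f => IsTransitiveAt f ⟨a, ha⟩))

theorem card_monoidHom_perm_eq_sum_orbitFinset (hG : Group.FG G) [DecidableEq α] (a : α) :
    Nat.card (G →* Perm α) = ∑ O with a ∈ O, Nat.card {H : Subgroup G // H.index = #O} *
      (#O - 1)! * Nat.card (G →* Perm (Fin (Nat.card α - #O))) := by
  have := hG.finite_monoidHom (Perm α)
  let orbit (f : G →* Perm α) : {O : Finset α // a ∈ O} :=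
    ⟨orbitFinset f a, mem_orbitFinset_self f a⟩
  rw [← Nat.card_congr (Equiv.sigmaFiberEquiv orbit), Nat.card_sigma,
    sum_subtype {O | a ∈ O} (p := (a ∈ ·)) (by simp)]
  refine sum_congr rfl fun O _ => ?_
  rw [Nat.card_congr ((Equiv.subtypeEquivRight fun f => Subtype.ext_iff).trans
      (orbitFiberEquiv O.2)), Nat.card_prod, card_isTransitiveAt hG, Nat.card_eq_finsetCard,
    card_monoidHom_perm_congr (Fintype.equivFinOfCardEq (n := Nat.card α - #O.1)
      (by simp [Fintype.card_subtype_compl]))]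

end Orbit

theorem card_monoidHom_perm_fin_succ (hG : Group.FG G) (m : ℕ) :
    Nat.card (G →* Perm (Fin (m + 1))) = ∑ j ∈ range (m + 1), m.choose j *
      (Nat.card {H : Subgroup G // H.index = j + 1} * j ! * Nat.card (G →* Perm (Fin (m - j)))) := by
  rw [card_monoidHom_perm_eq_sum_orbitFinset hG 0, sum_filter_mem_eq_sum_choose
    (Fintype.card_fin _) 0 (fun c => Nat.card {H : Subgroup G // H.index = c} * (c - 1)! *
      Nat.card (G →* Perm (Fin (Nat.card (Fin (m + 1)) - c))))]
  refine sum_congr rfl fun j _ => ?_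
  rw [Nat.card_fin, Nat.add_sub_add_right, Nat.add_sub_add_right, Nat.sub_zero, smul_eq_mul]

/-- Dividing by `m !` turns `C(m, j) j !` into `1 / (m - j)!`; the term `j = m` is `a (m + 1)`. -/
theorem recursion_of_eq_sum_choose {a N : ℕ → ℚ} {m : ℕ} (hN : N 0 = 1)
    (h : N (m + 1) = ∑ j ∈ range (m + 1), m.choose j * (a (j + 1) * j ! * N (m - j))) :
    a (m + 1) = N (m + 1) / (m ! : ℚ) - ∑ l ∈ Icc 1 m, N (m + 1 - l) * a l / (m + 1 - l)! := by
  have hdiv : N (m + 1) / m ! = ∑ j ∈ range (m + 1), a (j + 1) * N (m - j) / (m - j)! := by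
    rw [h, sum_div]
    refine sum_congr rfl fun j hj => ?_
    rw [Nat.cast_choose ℚ (Nat.lt_succ_iff.mp (mem_range.mp hj))]
    field_simp
  have hshift : ∑ l ∈ Icc 1 m, N (m + 1 - l) * a l / (m + 1 - l)! =
      ∑ j ∈ range m, a (j + 1) * N (m - j) / (m - j)! := by
    rw [← Ico_add_one_right_eq_Icc, sum_Ico_eq_sum_range]
    refine sum_congr (by simp) fun j _ => ?_
    rw [show m + 1 - (1 + j) = m - j by omega, add_comm 1 j, mul_comm]
  rw [hdiv, hshift, sum_range_succ, Nat.sub_self, hN]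
  simp

end HallRecursion

open HallRecursion in
/-- Hall's recursion for the number `a_k(G)` of index-`k` subgroups of a finitely
generated group `G`:
`a_k(G) = |Hom(G, S_k)|/(k−1)! − ∑_{l=1}^{k−1} |Hom(G, S_{k−l})| · a_l(G) / (k−l)!`. -/
theorem hall_recursion {G : Type*} [Group G] (hG : Group.FG G) (k : ℕ) (hk : 1 ≤ k) :
    (Nat.card {H : Subgroup G // H.index = k} : ℚ) =
      (Nat.card (G →* Equiv.Perm (Fin k)) : ℚ) / (Nat.factorial (k - 1)) -
        ∑ l ∈ Finset.Icc 1 (k - 1),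
          (Nat.card (G →* Equiv.Perm (Fin (k - l))) : ℚ) *
            (Nat.card {H : Subgroup G // H.index = l} : ℚ) / (Nat.factorial (k - l)) := by
  obtain ⟨m, rfl⟩ := Nat.exists_eq_add_of_le' hk
  have hN₀ : Nat.card (G →* Equiv.Perm (Fin 0)) = 1 :=
    Nat.card_eq_one_iff_unique.mpr ⟨⟨fun f g => MonoidHom.ext fun _ => Subsingleton.elim _ _⟩, ⟨1⟩⟩
  simpa using recursion_of_eq_sum_choose (a := fun l => Nat.card {H : Subgroup G // H.index = l})
    (N := fun n => Nat.card (G →* Equiv.Perm (Fin n))) (by simpa using hN₀)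
    (by exact_mod_cast card_monoidHom_perm_fin_succ hG m)
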